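/- With ξ(u,v) := −(p × γ(u) × γ'(u)) (Lorentzian triple product) and κ_γ(u) := det(γ(u), γ'(u), γ''(u), p), the second partial derivatives of the cone parametrization Φ satisfy, for all (u,v) with sin(v) ≠ 0: ∂²Φ/∂v²(u,v) = −Φ(u,v); ∂²Φ/∂u∂v(u,v) = cot(v)·∂Φ/∂u(u,v); and ∂²Φ/∂u²(u,v) = sin²(v)·Φ(u,v) + sin(v)cos(v)·∂Φ/∂v(u,v) − κ_γ(u)·sin(v)·ξ(u,v). -/

import Mathlib

/-!
Along a unit speed timelike curve `γ` in the pseudo-sphere `⟨x,x⟩ = 1, ⟨x,p⟩ = 0`, the vectors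
`p, γ, γ'` are pseudo-orthonormal, and with their triple product `N` every vector expands as
`y = ⟨y,p⟩p + ⟨y,γ⟩γ - ⟨y,γ'⟩γ' + ⟨y,N⟩N`. This completeness relation is the Gram determinant
identity `det ⟨xᵢ, yⱼ⟩ = -det(xᵢ) det(yⱼ)` for the rows `x, p, γ, γ'` and `y, p, γ, γ'`, so it
needs no a priori knowledge of `N`. Differentiating the constraints gives `⟨γ'',p⟩ = ⟨γ'',γ'⟩ = 0`
and `⟨γ'',γ⟩ = 1`, while `⟨γ'',N⟩ = κ_γ`; hence `γ'' = γ + κ_γ N`. The formulas for `Φ` follow,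
as `Φ` is linear in `(cos v, sin v)` and in `γ(u)`, using `cos² + sin² = 1`.
-/

open Real

/-- The Minkowski scalar product on `ℝ⁴₁`:
`⟨x,y⟩ = -x₁y₁ + x₂y₂ + x₃y₃ + x₄y₄`. -/
noncomputable def mdot (x y : Fin 4 → ℝ) : ℝ :=
  -(x 0 * y 0) + x 1 * y 1 + x 2 * y 2 + x 3 * y 3

open Matrix

section MinkowskiAlgebra

def minkowskiMetric : Matrix (Fin 4) (Fin 4) ℝ := diagonal ![-1, 1, 1, 1]

lemma mdot_comm (x y : Fin 4 → ℝ) : mdot x y = mdot y x := by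
  simp only [mdot]; ring

@[simp] lemma mdot_zero_right (x : Fin 4 → ℝ) : mdot x 0 = 0 := by
  simp [mdot]

lemma mdot_eq_dotProduct (x y : Fin 4 → ℝ) : mdot x y = x ⬝ᵥ (minkowskiMetric *ᵥ y) := by
  simp [mdot, minkowskiMetric, dotProduct, Fin.sum_univ_four, mulVec_diagonal]

lemma det_minkowskiMetric : minkowskiMetric.det = -1 := by
  simp [minkowskiMetric, Fin.prod_univ_four]

lemma eq_of_forall_mdot_eq {y z : Fin 4 → ℝ} (h : ∀ x, mdot x y = mdot x z) : y = z := by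
  funext i
  have := h (Pi.single i 1)
  fin_cases i <;> simpa [mdot] using this

lemma det_gram_mdot (u w : Fin 4 → Fin 4 → ℝ) :
    (of fun i j => mdot (u i) (w j)).det = -((of u).det * (of w).det) := by
  have : (of fun i j => mdot (u i) (w j)) = of u * minkowskiMetric * (of w)ᵀ := by
    ext i j
    simp only [mdot_eq_dotProduct, dotProduct, mulVec, of_apply, mul_apply, transpose_apply,
      Finset.mul_sum, mul_comm, mul_left_comm]
    exact Finset.sum_comm
  rw [this, det_mul, det_mul, det_minkowskiMetric, det_transpose]; ring

lemma det_of_rotate_two (a b c d : Fin 4 → ℝ) :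
    (of ![a, b, c, d]).det = (of ![c, d, a, b]).det := by
  have h := det_permute (Equiv.addRight (2 : Fin 4)) (of ![a, b, c, d])
  have hsign : Equiv.Perm.sign (Equiv.addRight (2 : Fin 4)) = 1 := by decide
  rw [hsign, Units.val_one, Int.cast_one, one_mul] at h
  rw [← h]
  congr 1
  ext i j; fin_cases i <;> rfl

def IsTripleProduct (a b c N : Fin 4 → ℝ) : Prop :=
  ∀ x, mdot x N = (of ![x, a, b, c]).det

variable {a b c N : Fin 4 → ℝ}

lemma mdot_eq_add_of_isTripleProduct
    (ha : mdot a a = 1) (hb : mdot b b = 1) (hc : mdot c c = -1)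
    (hab : mdot a b = 0) (hac : mdot a c = 0) (hbc : mdot b c = 0)
    (hN : IsTripleProduct a b c N) (x y : Fin 4 → ℝ) :
    mdot x y = mdot x a * mdot a y + mdot x b * mdot b y - mdot x c * mdot c y
      + mdot x N * mdot y N := by
  have hgram : (of fun i j => mdot (![x, a, b, c] i) (![y, a, b, c] j)) =
      of ![![mdot x y, mdot x a, mdot x b, mdot x c], ![mdot a y, 1, 0, 0],
        ![mdot b y, 0, 1, 0], ![mdot c y, 0, 0, -1]] := by
    ext i j
    fin_cases i <;> fin_cases j <;>
      simp [ha, hb, hc, hab, hac, hbc, mdot_comm b a, mdot_comm c a, mdot_comm c b]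
  have h := det_gram_mdot ![x, a, b, c] ![y, a, b, c]
  rw [← hN, ← hN, hgram] at h
  simp [det_succ_row_zero, Fin.sum_univ_succ, Fin.succAbove] at h
  linear_combination -h

lemma eq_add_smul_of_isTripleProduct
    (ha : mdot a a = 1) (hb : mdot b b = 1) (hc : mdot c c = -1)
    (hab : mdot a b = 0) (hac : mdot a c = 0) (hbc : mdot b c = 0)
    (hN : IsTripleProduct a b c N) (y : Fin 4 → ℝ) :
    y = mdot y a • a + mdot y b • b - mdot y c • c + mdot y N • N := by
  refine eq_of_forall_mdot_eq fun x => ?_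
  rw [mdot_eq_add_of_isTripleProduct ha hb hc hab hac hbc hN x y, mdot_comm a y,
    mdot_comm b y, mdot_comm c y]
  simp only [mdot, Pi.add_apply, Pi.sub_apply, Pi.smul_apply, smul_eq_mul]
  ring

end MinkowskiAlgebra

section CurveDerivatives

lemma hasDerivAt_mdot {f g : ℝ → Fin 4 → ℝ} {f' g' : Fin 4 → ℝ} {t : ℝ}
    (hf : HasDerivAt f f' t) (hg : HasDerivAt g g' t) :
    HasDerivAt (fun s => mdot (f s) (g s)) (mdot f' (g t) + mdot (f t) g') t := by
  have hfi := hasDerivAt_pi.1 hf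
  have hgi := hasDerivAt_pi.1 hg
  have H : HasDerivAt (fun s => mdot (f s) (g s)) _ t :=
    ((((hfi 0).mul (hgi 0)).neg.add ((hfi 1).mul (hgi 1))).add
      ((hfi 2).mul (hgi 2))).add ((hfi 3).mul (hgi 3))
  exact H.congr_deriv (by simp only [mdot]; ring)

lemma mdot_deriv_add_mdot_deriv_eq_zero {f g : ℝ → Fin 4 → ℝ} {c t : ℝ}
    (h : ∀ s, mdot (f s) (g s) = c) (hf : DifferentiableAt ℝ f t)
    (hg : DifferentiableAt ℝ g t) :
    mdot (deriv f t) (g t) + mdot (f t) (deriv g t) = 0 := by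
  have hconst : (fun s => mdot (f s) (g s)) = fun _ => c := funext h
  have := (hasDerivAt_mdot hf.hasDerivAt hg.hasDerivAt).deriv
  rw [hconst, deriv_const] at this
  exact this.symm

lemma mdot_deriv_eq_zero_of_mdot_eq_const {f : ℝ → Fin 4 → ℝ} {p : Fin 4 → ℝ} {c t : ℝ}
    (h : ∀ s, mdot (f s) p = c) (hf : DifferentiableAt ℝ f t) :
    mdot (deriv f t) p = 0 := by
  simpa using mdot_deriv_add_mdot_deriv_eq_zero h hf (differentiableAt_const p)

variable {p : Fin 4 → ℝ} {γ : ℝ → Fin 4 → ℝ}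

theorem deriv_deriv_eq_add_smul_of_isTripleProduct (hp : mdot p p = 1)
    (hγ : Differentiable ℝ γ) (hγ' : Differentiable ℝ (deriv γ))
    (hγγ : ∀ u, mdot (γ u) (γ u) = 1) (hγp : ∀ u, mdot (γ u) p = 0)
    (hγ'γ' : ∀ u, mdot (deriv γ u) (deriv γ u) = -1) {N : Fin 4 → ℝ} (u : ℝ)
    (hN : IsTripleProduct p (γ u) (deriv γ u) N) :
    deriv (deriv γ) u = γ u + (of ![γ u, deriv γ u, deriv (deriv γ) u, p]).det • N := by
  have hγ'γ : ∀ t, mdot (deriv γ t) (γ t) = 0 := fun t => by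
    have := mdot_deriv_add_mdot_deriv_eq_zero hγγ (hγ t) (hγ t)
    rw [mdot_comm (γ t)] at this
    linarith
  have hγ'p : ∀ t, mdot (deriv γ t) p = 0 := fun t =>
    mdot_deriv_eq_zero_of_mdot_eq_const hγp (hγ t)
  have hγ''p : mdot (deriv (deriv γ) u) p = 0 :=
    mdot_deriv_eq_zero_of_mdot_eq_const hγ'p (hγ' u)
  have hγ''γ : mdot (deriv (deriv γ) u) (γ u) = 1 := by
    have := mdot_deriv_add_mdot_deriv_eq_zero hγ'γ (hγ' u) (hγ u)
    linarith [hγ'γ' u]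
  have hγ''γ' : mdot (deriv (deriv γ) u) (deriv γ u) = 0 := by
    have := mdot_deriv_add_mdot_deriv_eq_zero hγ'γ' (hγ' u) (hγ' u)
    rw [mdot_comm (deriv γ u)] at this
    linarith
  have hγ''N : mdot (deriv (deriv γ) u) N
      = (of ![γ u, deriv γ u, deriv (deriv γ) u, p]).det := by
    rw [hN, det_of_rotate_two]
  have h := eq_add_smul_of_isTripleProduct hp (hγγ u) (hγ'γ' u) (by rw [mdot_comm, hγp])
    (by rw [mdot_comm, hγ'p]) (by rw [mdot_comm, hγ'γ]) hN (deriv (deriv γ) u)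
  rw [hγ''p, hγ''γ, hγ''γ', hγ''N] at h
  simpa using h

end CurveDerivatives

section Cone

variable {E : Type*} [NormedAddCommGroup E] [NormedSpace ℝ E]

lemma deriv_cos_smul_add_sin_smul (p q : E) :
    deriv (fun v => cos v • p + sin v • q) = fun v => -sin v • p + cos v • q :=
  funext fun v =>
    (((hasDerivAt_cos v).smul_const p).add ((hasDerivAt_sin v).smul_const q)).deriv

lemma deriv_neg_sin_smul_add_cos_smul (p q : E) (v : ℝ) :
    deriv (fun v => -sin v • p + cos v • q) v = -(cos v • p + sin v • q) := by
  refine (((hasDerivAt_sin v).neg.smul_const p).add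
    ((hasDerivAt_cos v).smul_const q)).deriv.trans ?_
  module

end Cone

/-- Second partial derivatives of the cone parametrization
`Φ(u,v) = cos v • p + sin v • γ(u)`. -/
theorem cone_second_derivatives
    (p : Fin 4 → ℝ) (hp : mdot p p = 1)
    (γ : ℝ → Fin 4 → ℝ) (hγsm : ContDiff ℝ (⊤ : ℕ∞) γ)
    (hγ1 : ∀ u, mdot (γ u) (γ u) = 1)
    (hγp : ∀ u, mdot (γ u) p = 0)
    (hγ' : ∀ u, mdot (deriv γ u) (deriv γ u) = -1)
    (Φ : ℝ → ℝ → Fin 4 → ℝ)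
    (hΦ : ∀ u v, Φ u v = Real.cos v • p + Real.sin v • γ u)
    (Nγ : ℝ → Fin 4 → ℝ)
    (hNγ : ∀ u x, mdot x (Nγ u) = (Matrix.of ![x, p, γ u, deriv γ u]).det)
    (ξ : ℝ → ℝ → Fin 4 → ℝ) (hξ : ∀ u v, ξ u v = -Nγ u)
    (κγ : ℝ → ℝ)
    (hκγ : ∀ u, κγ u = (Matrix.of ![γ u, deriv γ u, deriv (deriv γ) u, p]).det) :
    ∀ u v, Real.sin v ≠ 0 →
      deriv (fun v' => deriv (fun v'' => Φ u v'') v') v = -Φ u v ∧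
      deriv (fun u' => deriv (fun v' => Φ u' v') v) u
        = (Real.cos v / Real.sin v) • deriv (fun u' => Φ u' v) u ∧
      deriv (fun u' => deriv (fun u'' => Φ u'' v) u') u
        = Real.sin v ^ 2 • Φ u v
          + (Real.sin v * Real.cos v) • deriv (fun v' => Φ u v') v
          - (κγ u * Real.sin v) • ξ u v := by
  intro u v hv
  have hγd : Differentiable ℝ γ := hγsm.differentiable (by simp)
  have hγd' : Differentiable ℝ (deriv γ) :=
    (contDiff_infty_iff_deriv.1 hγsm).2.differentiable (by simp)
  have hΦv : ∀ u', deriv (fun v' => Φ u' v') = fun v' => -sin v' • p + cos v' • γ u' :=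
    fun u' => by simp only [hΦ]; exact deriv_cos_smul_add_sin_smul p (γ u')
  have hΦu : ∀ v', deriv (fun u' => Φ u' v') = fun u' => sin v' • deriv γ u' :=
    fun v' => funext fun u' => by
      simp only [hΦ]; rw [deriv_const_add, deriv_fun_const_smul _ (hγd u')]
  refine ⟨?_, ?_, ?_⟩
  · rw [hΦv, deriv_neg_sin_smul_add_cos_smul, hΦ]
  · simp only [hΦv, hΦu]
    rw [deriv_const_add, deriv_fun_const_smul _ (hγd u), smul_smul, div_mul_cancel₀ _ hv]
  · simp only [hΦu, hΦv]
    rw [deriv_fun_const_smul _ (hγd' u), deriv_deriv_eq_add_smul_of_isTripleProduct hp hγd hγd'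
      hγ1 hγp hγ' u (hNγ u), ← hκγ, hΦ, hξ]
    match_scalars
    · linear_combination (-sin v) * sin_sq_add_cos_sq v
    · ring
    · ring
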